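/- Suppose the 8-tuple (A₁₁, A₁₂, A₂₁, A₂₂, x̄₁, x̄₂, x₁*, x₂*) satisfies the system (S) and additionally A₂₁ > 0 and A₂₂ < 0. Then for every x ≥ x̄₂ one has s₂ − x ≤ ρ·(φ₂(x₂*) − c − λ(x − x₂*)); in particular the function Ṽ₂(x) = φ₂(x₂*) − c − λ(x − x₂*) on [x̄₂, ∞) satisfies −ρṼ₂(x) + (s₂ − x) ≤ 0 there. -/

import Mathlib

open Real Filter Set

/-- `φ₁(x) = A₁₁ e^{θx} + A₁₂ e^{−θx} + (x − s₁)/ρ`. -/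
noncomputable def phi1 (ρ θ s1 A11 A12 : ℝ) : ℝ → ℝ :=
  fun x => A11 * Real.exp (θ * x) + A12 * Real.exp (-(θ * x)) + (x - s1) / ρ

/-- `φ₂(x) = A₂₁ e^{θx} + A₂₂ e^{−θx} + (s₂ − x)/ρ`. -/
noncomputable def phi2 (ρ θ s2 A21 A22 : ℝ) : ℝ → ℝ :=
  fun x => A21 * Real.exp (θ * x) + A22 * Real.exp (-(θ * x)) + (s2 - x) / ρ

/-- The system (S): order conditions together with the ten equations, where
`θ = √(2ρ/σ²)`. -/
def SystemS (ρ σ lam lamt c ct s1 s2 A11 A12 A21 A22 xb1 xb2 xs1 xs2 : ℝ) : Prop :=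
  xb1 < xs1 ∧ xs1 < xb2 ∧ xb1 < xs2 ∧ xs2 < xb2 ∧
  deriv (phi1 ρ (Real.sqrt (2 * ρ / σ ^ 2)) s1 A11 A12) xs1 = lam ∧
  deriv (deriv (phi1 ρ (Real.sqrt (2 * ρ / σ ^ 2)) s1 A11 A12)) xs1 ≤ 0 ∧
  deriv (phi1 ρ (Real.sqrt (2 * ρ / σ ^ 2)) s1 A11 A12) xb1 = lam ∧
  phi1 ρ (Real.sqrt (2 * ρ / σ ^ 2)) s1 A11 A12 xb1
    = phi1 ρ (Real.sqrt (2 * ρ / σ ^ 2)) s1 A11 A12 xs1 - c - lam * (xs1 - xb1) ∧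
  phi1 ρ (Real.sqrt (2 * ρ / σ ^ 2)) s1 A11 A12 xb2
    = phi1 ρ (Real.sqrt (2 * ρ / σ ^ 2)) s1 A11 A12 xs2 + ct + lamt * (xb2 - xs2) ∧
  deriv (phi2 ρ (Real.sqrt (2 * ρ / σ ^ 2)) s2 A21 A22) xs2 = -lam ∧
  deriv (deriv (phi2 ρ (Real.sqrt (2 * ρ / σ ^ 2)) s2 A21 A22)) xs2 ≤ 0 ∧
  deriv (phi2 ρ (Real.sqrt (2 * ρ / σ ^ 2)) s2 A21 A22) xb2 = -lam ∧
  phi2 ρ (Real.sqrt (2 * ρ / σ ^ 2)) s2 A21 A22 xb1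
    = phi2 ρ (Real.sqrt (2 * ρ / σ ^ 2)) s2 A21 A22 xs1 + ct + lamt * (xs1 - xb1) ∧
  phi2 ρ (Real.sqrt (2 * ρ / σ ^ 2)) s2 A21 A22 xb2
    = phi2 ρ (Real.sqrt (2 * ρ / σ ^ 2)) s2 A21 A22 xs2 - c - lam * (xb2 - xs2)

/-!
With `a = A₂₁e^{θx}` and `b = −A₂₂e^{−θx}` one has `φ₂′ = θ(a + b) − 1/ρ`, `φ₂″ = θ²(a − b)`,
and the product `ab = −A₂₁A₂₂` does not depend on `x`. Equal slopes `φ₂′(x₂*) = φ₂′(x̄₂)`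
therefore give two pairs `(a, b)` with the same sum and product, i.e. the same pair up to order;
unless both coefficients vanish the pairs differ, so they are swapped and
`φ₂″(x̄₂) = −φ₂″(x₂*) ≥ 0`. Since `φ₂` solves `φ″ = θ²(φ − (s₂ − x)/ρ)`, this gives
`ρφ₂(x̄₂) ≥ s₂ − x̄₂`, and the jump condition at `x̄₂` together with `1 − λρ > 0` propagates the
bound to all `x ≥ x̄₂`.
-/

theorem eq_and_eq_or_eq_and_eq_of_add_eq_of_mul_eq {R : Type*} [CommRing R] [IsDomain R]
    {a b c d : R} (hsum : a + b = c + d) (hprod : a * b = c * d) :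
    (a = c ∧ b = d) ∨ (a = d ∧ b = c) := by
  have hroots : (a - c) * (a - d) = 0 := by linear_combination a * hsum - hprod
  rcases mul_eq_zero.mp hroots with h | h
  · exact .inl ⟨sub_eq_zero.mp h, by linear_combination hsum - h⟩
  · exact .inr ⟨sub_eq_zero.mp h, by linear_combination hsum - h⟩

section Phi2

variable {ρ θ s2 A21 A22 : ℝ}

theorem hasDerivAt_phi2 (x : ℝ) :
    HasDerivAt (phi2 ρ θ s2 A21 A22)
      (θ * (A21 * exp (θ * x) - A22 * exp (-(θ * x))) - 1 / ρ) x := by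
  have hlin : HasDerivAt (fun y : ℝ => θ * y) θ x := by
    simpa using (hasDerivAt_id x).const_mul θ
  have hneg : HasDerivAt (fun y : ℝ => -(θ * y)) (-θ) x := hlin.neg
  have hdrift : HasDerivAt (fun y : ℝ => (s2 - y) / ρ) (-1 / ρ) x := by
    simpa using ((hasDerivAt_id x).const_sub s2).div_const ρ
  exact (((hlin.exp.const_mul A21).add (hneg.exp.const_mul A22)).add hdrift).congr_deriv (by ring)

theorem deriv_phi2 :
    deriv (phi2 ρ θ s2 A21 A22)
      = fun x => θ * (A21 * exp (θ * x) - A22 * exp (-(θ * x))) - 1 / ρ :=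
  funext fun x => (hasDerivAt_phi2 x).deriv

theorem deriv_deriv_phi2 (x : ℝ) :
    deriv (deriv (phi2 ρ θ s2 A21 A22)) x
      = θ ^ 2 * (A21 * exp (θ * x) + A22 * exp (-(θ * x))) := by
  have hlin : HasDerivAt (fun y : ℝ => θ * y) θ x := by
    simpa using (hasDerivAt_id x).const_mul θ
  have hneg : HasDerivAt (fun y : ℝ => -(θ * y)) (-θ) x := hlin.neg
  have h : HasDerivAt (fun y => θ * (A21 * exp (θ * y) - A22 * exp (-(θ * y))) - 1 / ρ)
      (θ ^ 2 * (A21 * exp (θ * x) + A22 * exp (-(θ * x)))) x :=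
    ((((hlin.exp.const_mul A21).sub (hneg.exp.const_mul A22)).const_mul θ).sub_const
      (1 / ρ)).congr_deriv (by ring)
  rw [deriv_phi2, h.deriv]

theorem deriv_deriv_phi2_eq_sq_mul (x : ℝ) :
    deriv (deriv (phi2 ρ θ s2 A21 A22)) x = θ ^ 2 * (phi2 ρ θ s2 A21 A22 x - (s2 - x) / ρ) := by
  rw [deriv_deriv_phi2, phi2]
  ring

theorem deriv_deriv_phi2_eq_neg_of_deriv_eq {x y : ℝ} (hθ : θ ≠ 0) (hxy : x ≠ y)
    (hslope : deriv (phi2 ρ θ s2 A21 A22) x = deriv (phi2 ρ θ s2 A21 A22) y) :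
    deriv (deriv (phi2 ρ θ s2 A21 A22)) y = -deriv (deriv (phi2 ρ θ s2 A21 A22)) x := by
  simp only [deriv_deriv_phi2]
  simp only [deriv_phi2] at hslope
  have hsum : A21 * exp (θ * x) + -A22 * exp (-(θ * x))
      = A21 * exp (θ * y) + -A22 * exp (-(θ * y)) := by
    apply mul_left_cancel₀ hθ
    linear_combination hslope
  have hexp_mul (z : ℝ) : exp (θ * z) * exp (-(θ * z)) = 1 := by
    rw [← exp_add, add_neg_cancel, exp_zero]
  have hprod : A21 * exp (θ * x) * (-A22 * exp (-(θ * x)))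
      = A21 * exp (θ * y) * (-A22 * exp (-(θ * y))) := by
    linear_combination (-(A21 * A22)) * (hexp_mul x - hexp_mul y)
  rcases eq_and_eq_or_eq_and_eq_of_add_eq_of_mul_eq hsum hprod with ⟨ha, hb⟩ | ⟨ha, hb⟩
  · have hθx : θ * x ≠ θ * y := mul_right_injective₀ hθ |>.ne hxy
    have hA21 : A21 = 0 := by
      simpa [exp_eq_exp, hθx] using ha
    have hA22 : A22 = 0 := by
      simpa [exp_eq_exp, hθx] using hb
    simp [hA21, hA22]
  · linear_combination θ ^ 2 * (ha - hb)

theorem sub_le_mul_phi2_of_deriv_deriv_nonneg {x : ℝ} (hρ : 0 < ρ) (hθ : θ ≠ 0)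
    (hconvex : 0 ≤ deriv (deriv (phi2 ρ θ s2 A21 A22)) x) :
    s2 - x ≤ ρ * phi2 ρ θ s2 A21 A22 x := by
  rw [deriv_deriv_phi2_eq_sq_mul] at hconvex
  have hpos := nonneg_of_mul_nonneg_right hconvex (by positivity)
  rwa [sub_nonneg, div_le_iff₀' hρ] at hpos

end Phi2

theorem stmt_11_general (ρ σ lam lamt c ct s1 s2 : ℝ) (hρ : 0 < ρ) (hσ : 0 < σ)
    (h1 : 0 < 1 - lam * ρ)
    (A11 A12 A21 A22 xb1 xb2 xs1 xs2 : ℝ)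
    (hS : SystemS ρ σ lam lamt c ct s1 s2 A11 A12 A21 A22 xb1 xb2 xs1 xs2) :
    ∀ x : ℝ, xb2 ≤ x →
      s2 - x ≤ ρ * (phi2 ρ (Real.sqrt (2 * ρ / σ ^ 2)) s2 A21 A22 xs2 - c
        - lam * (x - xs2)) ∧
      -(ρ * (phi2 ρ (Real.sqrt (2 * ρ / σ ^ 2)) s2 A21 A22 xs2 - c
        - lam * (x - xs2))) + (s2 - x) ≤ 0 := by
  intro x hx
  obtain ⟨-, -, -, hlt, -, -, -, -, -, hslope_s, hconcave, hslope_b, -, hjump⟩ := hS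
  set θ := Real.sqrt (2 * ρ / σ ^ 2)
  have hθ : θ ≠ 0 := (Real.sqrt_pos.mpr (by positivity)).ne'
  have hconvex : 0 ≤ deriv (deriv (phi2 ρ θ s2 A21 A22)) xb2 := by
    rw [deriv_deriv_phi2_eq_neg_of_deriv_eq hθ hlt.ne (hslope_s.trans hslope_b.symm)]
    linarith
  have hbound := sub_le_mul_phi2_of_deriv_deriv_nonneg hρ hθ hconvex
  have hdecay : 0 ≤ (1 - lam * ρ) * (x - xb2) := mul_nonneg h1.le (sub_nonneg.mpr hx)
  constructor <;> nlinarith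

/-- On `[x̄₂, ∞)` the function `Ṽ₂(x) = φ₂(x₂*) − c − λ(x − x₂*)` satisfies
`s₂ − x ≤ ρ Ṽ₂(x)`, i.e. `−ρṼ₂(x) + (s₂ − x) ≤ 0`. -/
theorem stmt_11 (ρ σ lam lamt c ct s1 s2 : ℝ) (hρ : 0 < ρ) (hσ : 0 < σ)
    (h1 : 0 < 1 - lam * ρ) (h2 : lamt ≤ lam) (h3 : 0 ≤ lamt)
    (h4 : ct ≤ c) (h5 : 0 ≤ ct) (h6 : 0 < c)
    (h7 : (c, lam) ≠ (ct, lamt)) (h8 : s1 < s2)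
    (A11 A12 A21 A22 xb1 xb2 xs1 xs2 : ℝ)
    (hS : SystemS ρ σ lam lamt c ct s1 s2 A11 A12 A21 A22 xb1 xb2 xs1 xs2)
    (hA21 : 0 < A21) (hA22 : A22 < 0) :
    ∀ x : ℝ, xb2 ≤ x →
      s2 - x ≤ ρ * (phi2 ρ (Real.sqrt (2 * ρ / σ ^ 2)) s2 A21 A22 xs2 - c
        - lam * (x - xs2)) ∧
      -(ρ * (phi2 ρ (Real.sqrt (2 * ρ / σ ^ 2)) s2 A21 A22 xs2 - c
        - lam * (x - xs2))) + (s2 - x) ≤ 0 :=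
  stmt_11_general ρ σ lam lamt c ct s1 s2 hρ hσ h1 A11 A12 A21 A22 xb1 xb2 xs1 xs2 hS
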